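/- If the set function f : 2^V → ℝ≥0 is monotone and (γ,β)-weakly submodular for some γ ∈ (0,1] and β ≥ 1, then for every feasible subset S ⊆ V and every point x = (p_1,…,p_K) ∈ ∏_{k=1}^K Δ_{n_k}, one has γ²·f(S) − (β(1−γ) + γ²)·F(x) ≤ ⟨ Σ_{k=1}^K (1/B_k)·1_{S∩V_k}, ∇F(x) ⟩. -/

import Mathlib

/-!
Differentiating the product of the slot probabilities shows that `∂F/∂x_v` is the sum, over
the `B_k` slots `s` of the community of `v`, of the expected marginal gain `f(v | A_s)`, where
`A_s` is the set drawn by all slots other than `s`. The inner product is therefore the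
expectation of `∑_{v ∈ S} B_{k(v)}⁻¹ ∑_s f(v | A_s)`, and it suffices to bound this quantity for
every single draw, with `R` the set drawn by all slots. As `R` is `A_s` plus at most one element,
weak submodularity from below gives `f(v | A_s) ≥ γ f(v | R) - (1 - γ) (f R - f A_s)`, and also
`γ ∑_{v ∈ S} f(v | R) ≥ γ² (f S - f R)`. Feasibility bounds the averaged losses by
`∑_s (f R - f A_s)`. Only a slot that alone draws its element `w` loses anything, and it loses at
most `f(w | R \ {w})`, so this sum is at most `β f R` by weak submodularity from above.
-/

open Finset

noncomputable section

namespace Multinoulli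

variable {K : ℕ}

/-- An element of the ground set `V`: a community index `k` together with the
index `m` of the element `v_k^m` inside its community `V_k`. -/
abbrev Elem (n : Fin K → ℕ) := Σ k : Fin K, Fin (n k)

/-- A sampling slot: a community `k` together with a trial index `b ∈ {1,…,B_k}`. -/
abbrev Slot (B : Fin K → ℕ) := Σ k : Fin K, Fin (B k)

/-- A joint outcome of all the independent multinoulli trials; `none` encodes a
draw of `∅`, which contributes no element. -/
abbrev Choice (n B : Fin K → ℕ) := ∀ s : Slot B, Option (Fin (n s.1))

/-- The probability that `Multi(p_k)` (the `k`-th block of `x`) assigns to a given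
outcome: `x ⟨k,m⟩` for the element `v_k^m` and `1 - Σ_m x ⟨k,m⟩` for `∅`. -/
def prob (n : Fin K → ℕ) (x : Elem n → ℝ) (k : Fin K) : Option (Fin (n k)) → ℝ
  | some m => x ⟨k, m⟩
  | none => 1 - ∑ m : Fin (n k), x ⟨k, m⟩

/-- The probability of the joint outcome `e` (all trials are mutually independent). -/
def jointProb (n B : Fin K → ℕ) (x : Elem n → ℝ) (e : Choice n B) : ℝ :=
  ∏ s : Slot B, prob n x s.1 (e s)

/-- The subset of the ground set selected by the trials whose slot lies in `A`
(a draw of `∅` contributes no element to the union). -/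
def chosen (n B : Fin K → ℕ) (e : Choice n B) (A : Finset (Slot B)) : Finset (Elem n) :=
  A.biUnion fun s => ((e s).map fun m => (⟨s.1, m⟩ : Elem n)).toFinset

/-- The Multinoulli Extension `F` of the set function `f`:
`F(x) = E[f(∪_{k,b} {e_k^b})]` for mutually independent `e_k^b ∼ Multi(p_k)`. -/
def ME (n B : Fin K → ℕ) (f : Finset (Elem n) → ℝ) (x : Elem n → ℝ) : ℝ :=
  ∑ e : Choice n B, f (chosen n B e Finset.univ) * jointProb n B x e

/-- The first-order partial derivative `∂G/∂x_i` at `x`. -/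
def pderiv (n : Fin K → ℕ) (G : (Elem n → ℝ) → ℝ) (i : Elem n) (x : Elem n → ℝ) : ℝ :=
  deriv (fun t => G (Function.update x i t)) (x i)

/-- The gradient `∇G(x)`. -/
def grad (n : Fin K → ℕ) (G : (Elem n → ℝ) → ℝ) (x : Elem n → ℝ) : Elem n → ℝ :=
  fun i => pderiv n G i x

/-- The second-order partial derivative `∂²G/∂x_i∂x_j` at `x`. -/
def pderiv2 (n : Fin K → ℕ) (G : (Elem n → ℝ) → ℝ) (i j : Elem n) (x : Elem n → ℝ) : ℝ :=
  pderiv n (fun y => pderiv n G j y) i x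

/-- The Euclidean inner product on `∏_k ℝ^{n_k}`. -/
def inner' (n : Fin K → ℕ) (u v : Elem n → ℝ) : ℝ := ∑ i : Elem n, u i * v i

/-- Membership in the product of simplices `∏_{k=1}^K Δ_{n_k}`. -/
def InSimplex (n : Fin K → ℕ) (x : Elem n → ℝ) : Prop :=
  (∀ i, 0 ≤ x i) ∧ ∀ k : Fin K, ∑ m : Fin (n k), x ⟨k, m⟩ ≤ 1

/-- Feasibility for the partition constraint: `|S ∩ V_k| ≤ B_k` for all `k`. -/
def Feasible (n B : Fin K → ℕ) (S : Finset (Elem n)) : Prop :=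
  ∀ k : Fin K, (S.filter fun i => i.1 = k).card ≤ B k

/-- Monotonicity of a set function. -/
def MonotoneSet (n : Fin K → ℕ) (f : Finset (Elem n) → ℝ) : Prop :=
  ∀ A B : Finset (Elem n), A ⊆ B → f A ≤ f B

/-- The marginal contribution `f(v|A) = f(A ∪ {v}) - f(A)`. -/
def marg (n : Fin K → ℕ) (f : Finset (Elem n) → ℝ) (v : Elem n) (A : Finset (Elem n)) : ℝ :=
  f (insert v A) - f A

/-- `α`-weak DR-submodularity: `f(v|A) ≥ α·f(v|B)` for all `A ⊆ B` and `v ∉ B`. -/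
def WeaklyDR (n : Fin K → ℕ) (f : Finset (Elem n) → ℝ) (α : ℝ) : Prop :=
  ∀ A B : Finset (Elem n), A ⊆ B → ∀ v, v ∉ B → α * marg n f v B ≤ marg n f v A

/-- `γ`-weak submodularity from below. -/
def WeaklyBelow (n : Fin K → ℕ) (f : Finset (Elem n) → ℝ) (γ : ℝ) : Prop :=
  ∀ A B : Finset (Elem n), A ⊆ B → γ * (f B - f A) ≤ ∑ v ∈ B \ A, marg n f v A

/-- `β`-weak submodularity from above. -/
def WeaklyAbove (n : Fin K → ℕ) (f : Finset (Elem n) → ℝ) (β : ℝ) : Prop :=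
  ∀ A B : Finset (Elem n), A ⊆ B → ∑ v ∈ B \ A, marg n f v (B.erase v) ≤ β * (f B - f A)

/-- The scaled indicator vector `Σ_{k=1}^K (1/B_k)·1_{S∩V_k}`. -/
def indVec (n B : Fin K → ℕ) (S : Finset (Elem n)) : Elem n → ℝ :=
  fun i => if i ∈ S then ((B i.1 : ℝ))⁻¹ else 0

variable {n B : Fin K → ℕ}

lemma sum_prob (x : Elem n → ℝ) (k : Fin K) : ∑ o, prob n x k o = 1 := by
  simp [Fintype.sum_option, prob]

lemma sum_jointProb (x : Elem n → ℝ) : ∑ e : Choice n B, jointProb n B x e = 1 := by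
  simp only [jointProb, ← Fintype.prod_sum, sum_prob, Finset.prod_const_one]

lemma prob_nonneg {x : Elem n → ℝ} (hx : InSimplex n x) (k : Fin K) (o : Option (Fin (n k))) :
    0 ≤ prob n x k o := by
  cases o with
  | none => simpa [prob] using hx.2 k
  | some m => exact hx.1 ⟨k, m⟩

lemma jointProb_nonneg {x : Elem n → ℝ} (hx : InSimplex n x) (e : Choice n B) :
    0 ≤ jointProb n B x e :=
  Finset.prod_nonneg fun s _ => prob_nonneg hx s.1 (e s)

def jointProbErase (x : Elem n → ℝ) (s : Slot B) (e : Choice n B) : ℝ :=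
  ∏ s' ∈ univ.erase s, prob n x s'.1 (e s')

lemma jointProbErase_update (x : Elem n → ℝ) (e : Choice n B) (s : Slot B)
    (o : Option (Fin (n s.1))) :
    jointProbErase x s (Function.update e s o) = jointProbErase x s e :=
  Finset.prod_congr rfl fun _ hs' => by rw [Function.update_of_ne (Finset.ne_of_mem_erase hs')]

lemma jointProb_update (x : Elem n → ℝ) (e : Choice n B) (s : Slot B)
    (o : Option (Fin (n s.1))) :
    jointProb n B x (Function.update e s o) = prob n x s.1 o * jointProbErase x s e := by
  rw [jointProb, ← Finset.mul_prod_erase _ _ (Finset.mem_univ s), Function.update_self,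
    ← jointProbErase_update x e s o, jointProbErase]

lemma sum_pi_eq_sum_sum_update {ι : Type*} [Fintype ι] [DecidableEq ι] {β : ι → Type*}
    [∀ i, Fintype (β i)] [∀ i, DecidableEq (β i)] {M : Type*} [AddCommMonoid M]
    (i : ι) (b₀ : β i) (c : (∀ i, β i) → M) :
    ∑ e, c e = ∑ b, ∑ e with e i = b₀, c (Function.update e i b) := by
  rw [← Finset.sum_fiberwise univ (fun e => e i) c]
  refine Finset.sum_congr rfl fun b _ => ?_
  refine Finset.sum_nbij' (fun e => Function.update e i b₀) (fun e => Function.update e i b)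
    (by simp) (by simp) ?_ ?_ ?_
  all_goals
    intro e he
    simp only [Finset.mem_filter, Finset.mem_univ, true_and] at he
    simp [← he]

/-- The derivative of `t ↦ prob n (Function.update x v t) k o`, which does not depend on `x`. -/
def probDeriv (v : Elem n) (k : Fin K) : Option (Fin (n k)) → ℝ
  | some m => (Pi.single v 1 : Elem n → ℝ) ⟨k, m⟩
  | none => -∑ m, (Pi.single v 1 : Elem n → ℝ) ⟨k, m⟩

lemma hasDerivAt_prob (x : Elem n → ℝ) (v : Elem n) (k : Fin K) (o : Option (Fin (n k)))
    (t : ℝ) : HasDerivAt (fun t => prob n (Function.update x v t) k o) (probDeriv v k o) t := by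
  have hcoord := hasDerivAt_pi.1 (hasDerivAt_update x v t)
  cases o with
  | some m => exact hcoord ⟨k, m⟩
  | none =>
    exact (HasDerivAt.fun_sum fun m _ => hcoord ⟨k, m⟩).const_sub 1

lemma hasDerivAt_jointProb (x : Elem n → ℝ) (v : Elem n) (e : Choice n B) :
    HasDerivAt (fun t => jointProb n B (Function.update x v t) e)
      (∑ s, probDeriv v s.1 (e s) * jointProbErase x s e) (x v) := by
  have := HasDerivAt.fun_finsetProd (u := univ) fun s _ => hasDerivAt_prob x v s.1 (e s) (x v)
  simpa [jointProb, jointProbErase, mul_comm] using this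

lemma sum_single_mul (v : Elem n) (k : Fin K) (g : Elem n → ℝ) :
    ∑ m, g ⟨k, m⟩ * (Pi.single v 1 : Elem n → ℝ) ⟨k, m⟩
      = if k = v.1 then g v else 0 := by
  obtain ⟨k', m'⟩ := v
  by_cases h : k = k'
  · subst h
    simp [Pi.single_apply]
  · simp [h]

def pick (e : Choice n B) (s : Slot B) : Option (Elem n) := (e s).map (Sigma.mk s.1)

lemma chosen_mono (e : Choice n B) {A A' : Finset (Slot B)} (h : A ⊆ A') :
    chosen n B e A ⊆ chosen n B e A' :=
  Finset.biUnion_subset_biUnion_of_subset_left _ h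

lemma chosen_update_of_notMem (e : Choice n B) {A : Finset (Slot B)} {s : Slot B} (hs : s ∉ A)
    (o : Option (Fin (n s.1))) : chosen n B (Function.update e s o) A = chosen n B e A :=
  Finset.biUnion_congr rfl fun _ hs' => by
    rw [Function.update_of_ne (ne_of_mem_of_not_mem hs' hs)]

lemma chosen_univ_eq_union (e : Choice n B) (s : Slot B) :
    chosen n B e univ = (pick e s).toFinset ∪ chosen n B e (univ.erase s) := by
  conv_lhs => rw [chosen, ← Finset.insert_erase (Finset.mem_univ s), Finset.biUnion_insert]
  rfl

lemma chosen_univ_eq_of_pick_eq_none {e : Choice n B} {s : Slot B} (h : pick e s = none) :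
    chosen n B e univ = chosen n B e (univ.erase s) := by
  simp [chosen_univ_eq_union e s, h]

lemma chosen_univ_eq_insert_of_pick_eq_some {e : Choice n B} {s : Slot B} {w : Elem n}
    (h : pick e s = some w) : chosen n B e univ = insert w (chosen n B e (univ.erase s)) := by
  rw [chosen_univ_eq_union e s, h, Option.toFinset_some, ← Finset.insert_eq]

lemma mem_chosen_erase_of_pick_eq_some {e : Choice n B} {s s' : Slot B} {w : Elem n}
    (hne : s' ≠ s) (h : pick e s' = some w) : w ∈ chosen n B e (univ.erase s) :=
  Finset.mem_biUnion.2 ⟨s', Finset.mem_erase.2 ⟨hne, Finset.mem_univ _⟩,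
    show w ∈ (pick e s').toFinset by simp [h]⟩

lemma sum_probDeriv_mul (f : Finset (Elem n) → ℝ) (v : Elem n) (k : Fin K)
    (A : Finset (Elem n)) :
    ∑ o : Option (Fin (n k)), f ((o.map (Sigma.mk k)).toFinset ∪ A) * probDeriv v k o
      = if k = v.1 then marg n f v A else 0 := by
  have h1 : ∑ m, (Pi.single v 1 : Elem n → ℝ) ⟨k, m⟩ = if k = v.1 then 1 else 0 := by
    simpa using sum_single_mul v k 1
  simp only [Fintype.sum_option, probDeriv, Option.map_none, Option.map_some, Option.toFinset_none,
    Option.toFinset_some, Finset.empty_union, mul_neg, h1,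
    sum_single_mul v k fun w => f ({w} ∪ A)]
  split_ifs
  · rw [marg, Finset.insert_eq]
    ring
  · simp

def slots (B : Fin K → ℕ) (k : Fin K) : Finset (Slot B) := univ.filter fun s => s.1 = k

lemma card_slots (k : Fin K) : (slots B k).card = B k := by
  rw [slots, Finset.card_filter, Fintype.sum_sigma]
  simp [apply_ite Finset.card]

lemma sum_mul_probDeriv_mul_jointProbErase (f : Finset (Elem n) → ℝ) (x : Elem n → ℝ)
    (v : Elem n) (s : Slot B) :
    ∑ e, f (chosen n B e univ) * (probDeriv v s.1 (e s) * jointProbErase x s e)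
      = if s.1 = v.1 then
          ∑ e, marg n f v (chosen n B e (univ.erase s)) * jointProb n B x e else 0 := by
  have hs : s ∉ univ.erase s := Finset.notMem_erase s univ
  have hlhs : ∑ e, f (chosen n B e univ) * (probDeriv v s.1 (e s) * jointProbErase x s e)
      = ∑ e with e s = none, jointProbErase x s e *
          ∑ o, f ((o.map (Sigma.mk s.1)).toFinset ∪ chosen n B e (univ.erase s))
            * probDeriv v s.1 o := by
    rw [sum_pi_eq_sum_sum_update s none, Finset.sum_comm]
    refine Finset.sum_congr rfl fun e _ => ?_
    rw [Finset.mul_sum]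
    refine Finset.sum_congr rfl fun o _ => ?_
    rw [chosen_univ_eq_union _ s, pick, Function.update_self, chosen_update_of_notMem e hs,
      jointProbErase_update]
    ring
  have hrhs : ∑ e, marg n f v (chosen n B e (univ.erase s)) * jointProb n B x e
      = ∑ e with e s = none, jointProbErase x s e * marg n f v (chosen n B e (univ.erase s)) := by
    rw [sum_pi_eq_sum_sum_update s none, Finset.sum_comm]
    refine Finset.sum_congr rfl fun e _ => ?_
    simp_rw [chosen_update_of_notMem e hs, jointProb_update, ← Finset.mul_sum, ← Finset.sum_mul,
      sum_prob, one_mul, mul_comm]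
  simp_rw [hlhs, sum_probDeriv_mul, hrhs]
  split_ifs <;> simp

lemma pderiv_ME (f : Finset (Elem n) → ℝ) (x : Elem n → ℝ) (v : Elem n) :
    pderiv n (ME n B f) v x = ∑ s ∈ slots B v.1,
      ∑ e, marg n f v (chosen n B e (univ.erase s)) * jointProb n B x e := by
  have h := HasDerivAt.fun_sum (u := univ) fun e _ =>
    (hasDerivAt_jointProb x v e).const_mul (f (chosen n B e univ))
  simp only [pderiv, ME]
  rw [h.deriv, slots, Finset.sum_filter]
  simp_rw [Finset.mul_sum]
  rw [Finset.sum_comm]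
  exact Finset.sum_congr rfl fun s _ => sum_mul_probDeriv_mul_jointProbErase f x v s

lemma inner_indVec_grad_ME (f : Finset (Elem n) → ℝ) (x : Elem n → ℝ)
    (S : Finset (Elem n)) :
    inner' n (indVec n B S) (grad n (ME n B f) x) = ∑ e, jointProb n B x e *
      ∑ v ∈ S, (B v.1 : ℝ)⁻¹ *
        ∑ s ∈ slots B v.1, marg n f v (chosen n B e (univ.erase s)) := by
  simp only [inner', grad, indVec, ite_mul, zero_mul]
  rw [Finset.sum_ite_mem, Finset.univ_inter]
  simp only [pderiv_ME, Finset.mul_sum]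
  conv_rhs => rw [Finset.sum_comm]
  refine Finset.sum_congr rfl fun v _ => ?_
  rw [Finset.sum_comm]
  exact Finset.sum_congr rfl fun s _ => Finset.sum_congr rfl fun e _ => by ring

lemma marg_nonneg {f : Finset (Elem n) → ℝ} (hmono : MonotoneSet n f) (v : Elem n)
    (A : Finset (Elem n)) : 0 ≤ marg n f v A :=
  sub_nonneg.2 (hmono _ _ (Finset.subset_insert _ _))

lemma WeaklyBelow.mul_marg_insert_le {f : Finset (Elem n) → ℝ} {γ : ℝ}
    (hbelow : WeaklyBelow n f γ) (hmono : MonotoneSet n f) (v u : Elem n) (A : Finset (Elem n)) :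
    γ * marg n f v (insert u A) ≤ marg n f v A + (1 - γ) * marg n f u A := by
  have hsub : insert v (insert u A) \ A ⊆ {v, u} := by
    intro w
    simp only [Finset.mem_sdiff, Finset.mem_insert, Finset.mem_singleton]
    tauto
  have hpair : ∑ w ∈ {v, u}, marg n f w A ≤ marg n f v A + marg n f u A := by
    by_cases hvu : v = u
    · simpa [hvu] using marg_nonneg hmono u A
    · rw [Finset.sum_pair hvu]
  have hb := (hbelow A _ ((Finset.subset_insert u A).trans (Finset.subset_insert v _))).trans
    ((Finset.sum_le_sum_of_subset_of_nonneg hsub fun w _ _ => marg_nonneg hmono w A).trans hpair)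
  simp only [marg] at hb ⊢
  linarith

lemma WeaklyBelow.mul_sub_le_sum_marg {f : Finset (Elem n) → ℝ} {γ : ℝ}
    (hbelow : WeaklyBelow n f γ) (hmono : MonotoneSet n f) (hγ : 0 ≤ γ)
    (S R : Finset (Elem n)) :
    γ * (f S - f R) ≤ ∑ v ∈ S, marg n f v R := by
  have hb := hbelow R (R ∪ S) Finset.subset_union_left
  rw [Finset.union_sdiff_left] at hb
  calc γ * (f S - f R) ≤ γ * (f (R ∪ S) - f R) :=
        mul_le_mul_of_nonneg_left (by linarith [hmono S (R ∪ S) Finset.subset_union_right]) hγ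
    _ ≤ ∑ v ∈ S \ R, marg n f v R := hb
    _ ≤ ∑ v ∈ S, marg n f v R :=
        Finset.sum_le_sum_of_subset_of_nonneg Finset.sdiff_subset fun w _ _ => marg_nonneg hmono w R

lemma WeaklyAbove.sum_marg_erase_le {f : Finset (Elem n) → ℝ} {β : ℝ}
    (habove : WeaklyAbove n f β) (hf0 : ∀ S, 0 ≤ f S) (hβ : 0 ≤ β) (R : Finset (Elem n)) :
    ∑ w ∈ R, marg n f w (R.erase w) ≤ β * f R := by
  have hb := habove ∅ R (Finset.empty_subset R)
  rw [Finset.sdiff_empty] at hb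
  nlinarith [hf0 ∅]

lemma Feasible.pos_of_mem {S : Finset (Elem n)} (hS : Feasible n B S) {v : Elem n} (hv : v ∈ S) :
    0 < B v.1 :=
  have hcard : 0 < (S.filter fun i => i.1 = v.1).card :=
    Finset.card_pos.2 ⟨v, Finset.mem_filter.2 ⟨hv, rfl⟩⟩
  hcard.trans_le (hS v.1)

lemma Feasible.sum_inv_mul_le {S : Finset (Elem n)} (hS : Feasible n B S) {c : Fin K → ℝ}
    (hc : ∀ k, 0 ≤ c k) : ∑ v ∈ S, (B v.1 : ℝ)⁻¹ * c v.1 ≤ ∑ k, c k := by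
  rw [← Finset.sum_fiberwise_of_maps_to (g := Sigma.fst) (t := univ) fun v _ => Finset.mem_univ _]
  refine Finset.sum_le_sum fun k _ => ?_
  calc ∑ v ∈ S with v.1 = k, (B v.1 : ℝ)⁻¹ * c v.1
      = ((S.filter fun v => v.1 = k).card / B k : ℝ) * c k := by
        rw [Finset.sum_congr rfl fun v hv => by rw [(Finset.mem_filter.1 hv).2], Finset.sum_const,
          nsmul_eq_mul]
        ring
    _ ≤ 1 * c k :=
        mul_le_mul_of_nonneg_right
          (div_le_one_of_le₀ (by exact_mod_cast hS k) (by positivity)) (hc k)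
    _ = c k := one_mul _

lemma WeaklyBelow.mul_marg_chosen_univ_le {f : Finset (Elem n) → ℝ} {γ : ℝ}
    (hbelow : WeaklyBelow n f γ) (hmono : MonotoneSet n f) (hγ1 : γ ≤ 1) (e : Choice n B)
    (v : Elem n) (s : Slot B) :
    γ * marg n f v (chosen n B e univ) ≤ marg n f v (chosen n B e (univ.erase s))
      + (1 - γ) * (f (chosen n B e univ) - f (chosen n B e (univ.erase s))) := by
  cases h : pick e s with
  | none =>
    rw [chosen_univ_eq_of_pick_eq_none h, sub_self, mul_zero, add_zero]
    nlinarith [marg_nonneg hmono v (chosen n B e (univ.erase s))]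
  | some w =>
    rw [chosen_univ_eq_insert_of_pick_eq_some h]
    exact hbelow.mul_marg_insert_le hmono v w _

lemma sum_pick_eq_some_sub_le {f : Finset (Elem n) → ℝ} (hmono : MonotoneSet n f)
    (e : Choice n B) (w : Elem n) :
    ∑ s with pick e s = some w, (f (chosen n B e univ) - f (chosen n B e (univ.erase s)))
      ≤ if w ∈ chosen n B e univ then marg n f w ((chosen n B e univ).erase w) else 0 := by
  set R := chosen n B e univ
  set P := univ.filter fun s : Slot B => pick e s = some w
  have hpick {s} (hs : s ∈ P) : pick e s = some w := (Finset.mem_filter.1 hs).2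
  obtain hP | ⟨s, hs⟩ := P.eq_empty_or_nonempty
  · rw [hP, Finset.sum_empty]
    split_ifs
    exacts [marg_nonneg hmono _ _, le_rfl]
  have hR (s) (hs : s ∈ P) : R = insert w (chosen n B e (univ.erase s)) :=
    chosen_univ_eq_insert_of_pick_eq_some (hpick hs)
  rw [if_pos (hR s hs ▸ Finset.mem_insert_self _ _)]
  obtain hP | hnt := P.eq_singleton_or_nontrivial hs
  · rw [hP, Finset.sum_singleton, marg,
      Finset.insert_erase (hR s hs ▸ Finset.mem_insert_self _ _)]
    refine sub_le_sub_left (hmono _ _ fun u hu => ?_) _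
    obtain ⟨huw, huR⟩ := Finset.mem_erase.1 hu
    rw [hR s hs, Finset.mem_insert] at huR
    exact huR.resolve_left huw
  · -- `w` is drawn at two slots, so dropping either one leaves `R` unchanged.
    rw [Finset.sum_eq_zero fun s hs => ?_]
    · exact marg_nonneg hmono _ _
    obtain ⟨s', hs', hne⟩ := hnt.exists_ne s
    rw [hR s hs, Finset.insert_eq_of_mem (mem_chosen_erase_of_pick_eq_some hne (hpick hs')),
      sub_self]

lemma sum_sub_chosen_erase_le {f : Finset (Elem n) → ℝ} (hmono : MonotoneSet n f)
    (e : Choice n B) :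
    ∑ s, (f (chosen n B e univ) - f (chosen n B e (univ.erase s)))
      ≤ ∑ w ∈ chosen n B e univ, marg n f w ((chosen n B e univ).erase w) := by
  have hnone : ∑ s with pick e s = none,
      (f (chosen n B e univ) - f (chosen n B e (univ.erase s))) = 0 :=
    Finset.sum_eq_zero fun s hs => by
      rw [chosen_univ_eq_of_pick_eq_none (Finset.mem_filter.1 hs).2, sub_self]
  calc ∑ s, (f (chosen n B e univ) - f (chosen n B e (univ.erase s)))
      = ∑ w, ∑ s with pick e s = some w,
          (f (chosen n B e univ) - f (chosen n B e (univ.erase s))) := by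
        rw [← Finset.sum_fiberwise univ (pick e), Fintype.sum_option, hnone, zero_add]
    _ ≤ _ := Finset.sum_le_sum fun w _ => sum_pick_eq_some_sub_le hmono e w
    _ = _ := by rw [Finset.sum_ite_mem, Finset.univ_inter]

lemma gap_le_sum_marg_chosen_erase {f : Finset (Elem n) → ℝ} (hf0 : ∀ S, 0 ≤ f S)
    (hmono : MonotoneSet n f) {γ β : ℝ} (hγ0 : 0 ≤ γ) (hγ1 : γ ≤ 1) (hβ : 0 ≤ β)
    (hbelow : WeaklyBelow n f γ) (habove : WeaklyAbove n f β)
    {S : Finset (Elem n)} (hS : Feasible n B S) (e : Choice n B) :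
    γ ^ 2 * f S - (β * (1 - γ) + γ ^ 2) * f (chosen n B e univ) ≤
      ∑ v ∈ S, (B v.1 : ℝ)⁻¹ *
        ∑ s ∈ slots B v.1, marg n f v (chosen n B e (univ.erase s)) := by
  set R := chosen n B e univ
  set A := fun s => chosen n B e (univ.erase s)
  set gap := fun k => ∑ s ∈ slots B k, (f R - f (A s))
  have hgap_nonneg (k) : 0 ≤ gap k :=
    Finset.sum_nonneg fun s _ => sub_nonneg.2 (hmono _ _ (chosen_mono e (Finset.erase_subset _ _)))
  have hgap : ∑ v ∈ S, (B v.1 : ℝ)⁻¹ * gap v.1 ≤ β * f R :=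
    calc ∑ v ∈ S, (B v.1 : ℝ)⁻¹ * gap v.1 ≤ ∑ k, gap k := hS.sum_inv_mul_le hgap_nonneg
      _ = ∑ s, (f R - f (A s)) := Finset.sum_fiberwise univ Sigma.fst _
      _ ≤ β * f R := (sum_sub_chosen_erase_le hmono e).trans (habove.sum_marg_erase_le hf0 hβ R)
  have hslot (v : Elem n) (hv : v ∈ S) :
      γ * marg n f v R - (1 - γ) * ((B v.1 : ℝ)⁻¹ * gap v.1)
      ≤ (B v.1 : ℝ)⁻¹ * ∑ s ∈ slots B v.1, marg n f v (A s) := by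
    have hBv : (B v.1 : ℝ) ≠ 0 := by exact_mod_cast (hS.pos_of_mem hv).ne'
    calc γ * marg n f v R - (1 - γ) * ((B v.1 : ℝ)⁻¹ * gap v.1)
        = (B v.1 : ℝ)⁻¹ *
            ∑ s ∈ slots B v.1, (γ * marg n f v R - (1 - γ) * (f R - f (A s))) := by
          rw [Finset.sum_sub_distrib, Finset.sum_const, card_slots, nsmul_eq_mul,
            ← Finset.mul_sum]
          field_simp
          rfl
      _ ≤ _ := mul_le_mul_of_nonneg_left (Finset.sum_le_sum fun s _ => by
          linarith [hbelow.mul_marg_chosen_univ_le hmono hγ1 e v s]) (by positivity)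
  have hR := hbelow.mul_sub_le_sum_marg hmono hγ0 S R
  calc γ ^ 2 * f S - (β * (1 - γ) + γ ^ 2) * f R
      ≤ γ * ∑ v ∈ S, marg n f v R
          - (1 - γ) * ∑ v ∈ S, (B v.1 : ℝ)⁻¹ * gap v.1 := by
        nlinarith [mul_le_mul_of_nonneg_left hR hγ0,
          mul_le_mul_of_nonneg_left hgap (sub_nonneg.2 hγ1)]
    _ = ∑ v ∈ S, (γ * marg n f v R - (1 - γ) * ((B v.1 : ℝ)⁻¹ * gap v.1)) := by
        rw [Finset.sum_sub_distrib, Finset.mul_sum, Finset.mul_sum]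
    _ ≤ _ := Finset.sum_le_sum hslot

theorem multinoulliExtension_weaklySub_gap_bound_general {K : ℕ} (n B : Fin K → ℕ)
    (f : Finset (Elem n) → ℝ) (hf0 : ∀ S, 0 ≤ f S)
    (hmono : MonotoneSet n f)
    (γ β : ℝ) (hγ0 : 0 < γ) (hγ1 : γ ≤ 1) (hβ : 1 ≤ β)
    (hbelow : WeaklyBelow n f γ) (habove : WeaklyAbove n f β)
    (S : Finset (Elem n)) (hS : Feasible n B S)
    (x : Elem n → ℝ) (hx : InSimplex n x) :
    γ ^ 2 * f S - (β * (1 - γ) + γ ^ 2) * ME n B f x ≤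
      inner' n (indVec n B S) (grad n (ME n B f) x) := by
  have hpoint (e : Choice n B) := gap_le_sum_marg_chosen_erase hf0 hmono hγ0.le hγ1
    (zero_le_one.trans hβ) hbelow habove hS e
  calc γ ^ 2 * f S - (β * (1 - γ) + γ ^ 2) * ME n B f x
      = γ ^ 2 * f S * ∑ e, jointProb n B x e
          - (β * (1 - γ) + γ ^ 2) * ∑ e, f (chosen n B e univ) * jointProb n B x e := by
        rw [sum_jointProb, mul_one, ME]
    _ = ∑ e, jointProb n B x e *
          (γ ^ 2 * f S - (β * (1 - γ) + γ ^ 2) * f (chosen n B e univ)) := by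
        rw [Finset.mul_sum, Finset.mul_sum, ← Finset.sum_sub_distrib]
        exact Finset.sum_congr rfl fun e _ => by ring
    _ ≤ _ := Finset.sum_le_sum fun e _ =>
        mul_le_mul_of_nonneg_left (hpoint e) (jointProb_nonneg hx e)
    _ = _ := (inner_indVec_grad_ME f x S).symm

theorem multinoulliExtension_weaklySub_gap_bound {K : ℕ} (n B : Fin K → ℕ) (hn : ∀ k, 1 ≤ n k)
    (hB : ∀ k, 0 < B k) (hBn : ∀ k, B k ≤ n k)
    (f : Finset (Elem n) → ℝ) (hf0 : ∀ S, 0 ≤ f S)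
    (hmono : MonotoneSet n f)
    (γ β : ℝ) (hγ0 : 0 < γ) (hγ1 : γ ≤ 1) (hβ : 1 ≤ β)
    (hbelow : WeaklyBelow n f γ) (habove : WeaklyAbove n f β)
    (S : Finset (Elem n)) (hS : Feasible n B S)
    (x : Elem n → ℝ) (hx : InSimplex n x) :
    γ ^ 2 * f S - (β * (1 - γ) + γ ^ 2) * ME n B f x ≤
      inner' n (indVec n B S) (grad n (ME n B f) x) :=
  multinoulliExtension_weaklySub_gap_bound_general n B f hf0 hmono γ β hγ0 hγ1 hβ hbelow habove S hS
    x hx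

end Multinoulli
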